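/- arXiv:math/0306369 — 3 statements merged into one kernel-verified Lean document; each statement's English description precedes it below -/
import Mathlib

section
/- Let H be a finite affine hyperplane arrangement in ℝ^m. Then the bounded complex of H (the union of the bounded faces of the polyhedral subdivision of ℝ^m induced by H), if non-empty, is contractible. -/
open scoped RealInnerProductSpace

/-- The (relatively open) face of the affine hyperplane arrangement
`H = {x | ⟪a i, x⟫ = b i}` in `ℝ^m` with sign vector `σ`: the set of points lying on
hyperplane `i` if `σ i = 0`, and strictly on the `σ i` side of it otherwise. -/
def arrFace {ι : Type*} {m : ℕ} (a : ι → EuclideanSpace ℝ (Fin m)) (b : ι → ℝ)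
    (σ : ι → SignType) : Set (EuclideanSpace ℝ (Fin m)) :=
  {x | ∀ i, SignType.sign (⟪a i, x⟫ - b i) = σ i}

/-- The bounded complex of the arrangement: the union of the bounded faces, i.e. the set of
points whose own face is a bounded set. -/
def boundedComplex {ι : Type*} {m : ℕ} (a : ι → EuclideanSpace ℝ (Fin m)) (b : ι → ℝ) :
    Set (EuclideanSpace ℝ (Fin m)) :=
  {x | Bornology.IsBounded (arrFace a b (fun i => SignType.sign (⟪a i, x⟫ - b i)))}

/-!
Let `f = l1Residual a b`, `f x = ∑ i, |⟪a i, x⟫ - b i|`. Its subgradients lie in the zonotope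
`Z = ∑ i, [-a i, a i]`, and a point whose face is unbounded has no subgradient in the interior of
`Z`: along a recession direction `d` of the face, `f` decreases at the full rate
`zonotopeSupport a d`. So the proximal point `P` of `f` at `w` with linear tilt `y`, at which
`y - μ • (P - w)` is a subgradient, lies in the bounded complex once `y` is deep inside `Z` and `μ`
is small. Bounded faces have no recession directions, and there are finitely many faces, so the
Huber gradients of `f` at points of the bounded complex lie uniformly deep inside `Z`. Hence the
homotopy `(t, x) ↦ prox ((1 - t) • huberGradient t x) ((1 - t) • x + t • x₀)` stays in the bounded
complex; it tends to the identity as `t → 0`, where the Huber gradient becomes a subgradient at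
`x`, and it is constant at `t = 1`.
-/

open Filter Topology Set Metric Bornology

-- `signGap s v ≥ 0` vanishes iff moving in direction `v` keeps a quantity of sign `s` at sign `s`
-- (for `s = 0`: iff `v = 0`).
noncomputable def signGap (s : SignType) (v : ℝ) : ℝ := |v| - max (s * v) 0

lemma signGap_nonneg (s : SignType) (v : ℝ) : 0 ≤ signGap s v := by
  unfold signGap
  cases s <;> simp [abs_nonneg, le_abs_self, neg_le_abs]

lemma signGap_mul (s : SignType) (v : ℝ) {t : ℝ} (ht : 0 ≤ t) :
    signGap s (t * v) = t * signGap s v := by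
  unfold signGap
  rw [abs_mul, abs_of_nonneg ht, mul_sub, mul_max_of_nonneg _ _ ht, mul_zero, mul_left_comm]

lemma signGap_sub_le {h h' : ℝ} (hs : SignType.sign h' = SignType.sign h) :
    signGap (SignType.sign h) (h' - h) ≤ |h| := by
  unfold signGap
  rcases lt_trichotomy h 0 with h0 | h0 | h0
  · rw [sign_neg h0] at hs ⊢
    have := sign_eq_neg_one_iff.mp hs
    simp only [SignType.coe_neg, SignType.coe_one]
    cases abs_cases (h' - h) <;> cases max_cases (-1 * (h' - h)) 0 <;> cases abs_cases h <;>
      linarith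
  · simp [h0] at hs ⊢; simp [hs]
  · rw [sign_pos h0] at hs ⊢
    have := sign_eq_one_iff.mp hs
    simp only [SignType.coe_one]
    cases abs_cases (h' - h) <;> cases max_cases (1 * (h' - h)) 0 <;> cases abs_cases h <;>
      linarith

lemma sign_add_mul_of_signGap_eq_zero {h v t : ℝ} (hv : signGap (SignType.sign h) v = 0)
    (ht : 0 ≤ t) : SignType.sign (h + t * v) = SignType.sign h := by
  unfold signGap at hv
  rcases lt_trichotomy h 0 with h0 | h0 | h0
  · rw [sign_neg h0] at hv ⊢
    simp only [SignType.coe_neg, SignType.coe_one] at hv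
    apply sign_neg
    cases abs_cases v <;> cases max_cases (-1 * v) 0 <;> nlinarith
  · simp [h0] at hv ⊢; simp [hv]
  · rw [sign_pos h0] at hv ⊢
    simp only [SignType.coe_one] at hv
    apply sign_pos
    cases abs_cases v <;> cases max_cases (1 * v) 0 <;> nlinarith

lemma eventually_abs_sub_mul {h v : ℝ} (hv : signGap (SignType.sign h) v = 0) :
    ∀ᶠ t in 𝓝 0, |h - t * v| = |h| - t * |v| := by
  have hlim : Tendsto (fun t => h - t * v) (𝓝 0) (𝓝 h) :=
    (show Continuous (fun t : ℝ => h - t * v) by fun_prop).tendsto' 0 h (by simp)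
  unfold signGap at hv
  rcases lt_trichotomy h 0 with h0 | rfl | h0
  · rw [sign_neg h0] at hv
    have hv' : v ≤ 0 := by
      simp only [SignType.coe_neg, SignType.coe_one] at hv
      cases abs_cases v <;> cases max_cases (-1 * v) 0 <;> linarith
    filter_upwards [hlim.eventually (eventually_lt_nhds h0)] with t ht
    rw [abs_of_neg ht, abs_of_neg h0, abs_of_nonpos hv']; ring
  · simp at hv; simp [hv]
  · rw [sign_pos h0] at hv
    have hv' : 0 ≤ v := by
      simp only [SignType.coe_one] at hv
      cases abs_cases v <;> cases max_cases (1 * v) 0 <;> linarith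
    filter_upwards [hlim.eventually (eventually_gt_nhds h0)] with t ht
    rw [abs_of_pos ht, abs_of_pos h0, abs_of_nonneg hv']

lemma mul_add_signGap_le {c h : ℝ} (hc : |c| ≤ 1) (hch : 0 ≤ c * h) (h0 : h = 0 → c = 0)
    (v : ℝ) : c * v + signGap (SignType.sign h) v ≤ |v| := by
  unfold signGap
  rw [abs_le] at hc
  rcases lt_trichotomy h 0 with hh | hh | hh
  · have : c ≤ 0 := by nlinarith
    rw [sign_neg hh]
    simp only [SignType.coe_neg, SignType.coe_one]
    cases abs_cases v <;> cases max_cases (-1 * v) 0 <;> nlinarith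
  · simp [h0 hh]
  · have : 0 ≤ c := by nlinarith
    rw [sign_pos hh]
    simp only [SignType.coe_one]
    cases abs_cases v <;> cases max_cases (1 * v) 0 <;> nlinarith

lemma abs_add_mul_sub_le {c h : ℝ} (hc : |c| ≤ 1) (hsign : h ≠ 0 → c = SignType.sign h)
    (h' : ℝ) : |h| + c * (h' - h) ≤ |h'| := by
  have hch' : c * h' ≤ |h'| :=
    (le_abs_self _).trans (by rw [abs_mul]; exact mul_le_of_le_one_left (abs_nonneg _) hc)
  rcases eq_or_ne h 0 with rfl | h0
  · simpa using hch'
  · have hch : c * h = |h| := by rw [hsign h0]; exact sign_mul_self h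
    linarith

noncomputable def clampUnit (t : ℝ) : ℝ := max (-1) (min 1 t)

lemma abs_clampUnit_le (t : ℝ) : |clampUnit t| ≤ 1 :=
  abs_le.2 ⟨le_max_left _ _, max_le (by norm_num) (min_le_left _ _)⟩

lemma clampUnit_mul_self_nonneg (t : ℝ) : 0 ≤ clampUnit t * t := by
  unfold clampUnit
  rcases le_total 0 t with ht | ht
  · exact mul_nonneg (le_max_of_le_right (le_min zero_le_one ht)) ht
  · exact mul_nonneg_of_nonpos_of_nonpos (max_le (by norm_num) ((min_le_right _ _).trans ht)) ht

lemma clampUnit_zero : clampUnit 0 = 0 := by norm_num [clampUnit]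

lemma clampUnit_of_one_le {t : ℝ} (ht : 1 ≤ t) : clampUnit t = 1 := by
  rw [clampUnit, min_eq_left ht, max_eq_right (by norm_num)]

lemma clampUnit_of_le_neg_one {t : ℝ} (ht : t ≤ -1) : clampUnit t = -1 := by
  rw [clampUnit, max_eq_left ((min_le_right _ _).trans ht)]

@[fun_prop]
lemma continuous_clampUnit : Continuous clampUnit := by unfold clampUnit; fun_prop

lemma eventually_clampUnit_div_eq_sign {h : ℝ} (h0 : h ≠ 0) :
    ∀ᶠ p : ℝ × ℝ in 𝓝 (0, h), 0 < p.1 → clampUnit (p.2 / p.1) = SignType.sign h := by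
  filter_upwards [ball_mem_nhds ((0 : ℝ), h) (half_pos (abs_pos.2 h0))] with p hp hp1
  rw [mem_ball, Prod.dist_eq, max_lt_iff, Real.dist_eq, Real.dist_eq, sub_zero] at hp
  obtain ⟨h1, h2⟩ := hp
  rw [abs_of_pos hp1] at h1
  rcases lt_or_gt_of_ne h0 with hneg | hpos
  · rw [sign_neg hneg, clampUnit_of_le_neg_one]
    · simp
    · rw [div_le_iff₀ hp1]
      cases abs_cases (p.2 - h) <;> cases abs_cases h <;> linarith
  · rw [sign_pos hpos, clampUnit_of_one_le]
    · simp
    · rw [le_div_iff₀ hp1]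
      cases abs_cases (p.2 - h) <;> cases abs_cases h <;> linarith

lemma nonneg_of_eventually_nonneg_add_mul {A B : ℝ} (h : ∀ᶠ t in 𝓝[>] 0, 0 ≤ A + B * t) :
    0 ≤ A := by
  have hlim : Tendsto (fun t => A + B * t) (𝓝[>] 0) (𝓝 A) :=
    ((show Continuous (fun t : ℝ => A + B * t) by fun_prop).tendsto' 0 A (by simp)).mono_left
      nhdsWithin_le_nhds
  exact ge_of_tendsto hlim h

section Normed

variable {E : Type*} [NormedAddCommGroup E] [NormedSpace ℝ E]

lemma not_isBounded_of_forall_add_smul_mem {s : Set E} {x d : E} (hd : d ≠ 0)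
    (h : ∀ t : ℝ, 0 ≤ t → x + t • d ∈ s) : ¬ IsBounded s := by
  intro hs
  obtain ⟨r, hr⟩ := isBounded_iff_forall_norm_le.1 hs
  have hd' : 0 < ‖d‖ := norm_pos_iff.2 hd
  have hr0 : 0 ≤ r := (norm_nonneg x).trans (hr x (by simpa using h 0 le_rfl))
  set t := (r + ‖x‖ + 1) / ‖d‖
  have ht : 0 ≤ t := by positivity
  have h1 := hr _ (h t ht)
  have h2 : ‖t • d‖ ≤ ‖x + t • d‖ + ‖x‖ := by simpa using norm_sub_le (x + t • d) x
  rw [norm_smul, Real.norm_eq_abs, abs_of_nonneg ht, div_mul_cancel₀ _ hd'.ne'] at h2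
  linarith

lemma eventually_mul_norm_le_of_pos [ProperSpace E] {g : E → ℝ} (hg : Continuous g)
    (hsmul : ∀ t : ℝ, 0 ≤ t → ∀ d, g (t • d) = t * g d) (hpos : ∀ d, d ≠ 0 → 0 < g d) :
    ∀ᶠ c in 𝓝[>] 0, ∀ d, c * ‖d‖ ≤ g d := by
  rcases subsingleton_or_nontrivial E with hE | hE
  · refine Eventually.of_forall fun c d => ?_
    have : g 0 = 0 := by simpa using hsmul 0 le_rfl 0
    simp [Subsingleton.elim d 0, this]
  obtain ⟨e, he, hmin⟩ := (isCompact_sphere (0 : E) 1).exists_isMinOn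
    (NormedSpace.sphere_nonempty.mpr zero_le_one) hg.continuousOn
  filter_upwards [Ioo_mem_nhdsGT (hpos e (ne_of_mem_sphere he one_ne_zero))] with c hc d
  rcases eq_or_ne d 0 with rfl | hd
  · simpa using (hsmul 0 le_rfl 0).ge
  have hnorm : 0 < ‖d‖ := norm_pos_iff.mpr hd
  have hunit : ‖d‖⁻¹ • d ∈ sphere (0 : E) 1 := by simp [norm_smul, hnorm.ne']
  calc c * ‖d‖ ≤ g e * ‖d‖ := by gcongr; exact hc.2.le
    _ ≤ g (‖d‖⁻¹ • d) * ‖d‖ := by gcongr; exact hmin hunit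
    _ = g d := by rw [hsmul _ (inv_nonneg.mpr hnorm.le)]; field_simp

end Normed

lemma contractibleSpace_of_homotopy {X : Type*} [TopologicalSpace X] {S : Set X}
    {H : ℝ × X → X} (hH : Continuous H) (h0 : ∀ x, H (0, x) = x) {z : X}
    (h1 : ∀ x ∈ S, H (1, x) = z) (hmaps : ∀ t ∈ Icc (0 : ℝ) 1, ∀ x ∈ S, H (t, x) ∈ S)
    (hS : S.Nonempty) : ContractibleSpace S := by
  obtain ⟨x, hx⟩ := hS
  have hz : z ∈ S := h1 x hx ▸ hmaps 1 ⟨zero_le_one, le_rfl⟩ x hx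
  refine (contractible_iff_id_nullhomotopic S).2 ⟨⟨z, hz⟩, ⟨?_⟩⟩
  exact
    { toFun := fun q => ⟨H (q.1, q.2), hmaps _ q.1.2 _ q.2.2⟩
      continuous_toFun := by fun_prop
      map_zero_left := fun y => Subtype.ext (h0 y)
      map_one_left := fun y => Subtype.ext (h1 y y.2) }

section Prox

variable {E : Type*} [NormedAddCommGroup E] [InnerProductSpace ℝ E]

def IsSubgradient (F : E → ℝ) (g x : E) : Prop := ∀ z, F x + ⟪g, z - x⟫ ≤ F z

noncomputable def proxObjective (F : E → ℝ) (μ : ℝ) (y w z : E) : ℝ :=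
  F z - ⟪y, z⟫ + μ / 2 * ‖z - w‖ ^ 2

lemma IsSubgradient.inner_sub_nonneg {F : E → ℝ} {g g' x x' : E} (h : IsSubgradient F g x)
    (h' : IsSubgradient F g' x') : 0 ≤ ⟪g - g', x - x'⟫ := by
  have h1 := h x'
  have h2 := h' x
  rw [← neg_sub x x', inner_neg_right] at h1
  rw [inner_sub_left]
  linarith

lemma norm_sub_le_of_isSubgradient {F : E → ℝ} {μ : ℝ} (hμ : 0 < μ) {y w P y' w' Q : E}
    (hP : IsSubgradient F (y - μ • (P - w)) P) (hQ : IsSubgradient F (y' - μ • (Q - w')) Q) :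
    ‖P - Q‖ ≤ ‖y - y'‖ / μ + ‖w - w'‖ := by
  have hmono := hP.inner_sub_nonneg hQ
  have hsplit : y - μ • (P - w) - (y' - μ • (Q - w')) = (y - y') + μ • (w - w') - μ • (P - Q) := by
    simp only [smul_sub]; abel
  rw [hsplit, inner_sub_left, inner_add_left, real_inner_smul_left, real_inner_smul_left,
    real_inner_self_eq_norm_sq] at hmono
  have h1 := real_inner_le_norm (y - y') (P - Q)
  have h2 := real_inner_le_norm (w - w') (P - Q)
  have key : μ * ‖P - Q‖ ^ 2 ≤ (‖y - y'‖ + μ * ‖w - w'‖) * ‖P - Q‖ := by nlinarith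
  rcases (norm_nonneg (P - Q)).eq_or_lt with h0 | h0
  · rw [← h0]; positivity
  · rw [div_add' _ _ _ hμ.ne', le_div_iff₀ hμ]
    nlinarith

lemma isSubgradient_of_forall_proxObjective_le {F : E → ℝ} (hF : ConvexOn ℝ univ F) {μ : ℝ}
    {y w P : E}
    (hP : ∀ z, proxObjective F μ y w P ≤ proxObjective F μ y w z) :
    IsSubgradient F (y - μ • (P - w)) P := by
  intro z
  have key : ∀ t ∈ Ioo (0 : ℝ) 1,
      0 ≤ (F z - F P - ⟪y - μ • (P - w), z - P⟫) + μ / 2 * ‖z - P‖ ^ 2 * t := by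
    intro t ht
    have hconv := hF.2 (mem_univ P) (mem_univ z) (by linarith [ht.2] : (0:ℝ) ≤ 1 - t) ht.1.le
      (by ring)
    have hmin := hP ((1 - t) • P + t • z)
    have hpt : (1 - t) • P + t • z = P + t • (z - P) := by
      simp only [sub_smul, one_smul, smul_sub]; abel
    rw [hpt] at hconv hmin
    simp only [proxObjective] at hmin
    have hn : ‖P + t • (z - P) - w‖ ^ 2
        = ‖P - w‖ ^ 2 + 2 * t * ⟪P - w, z - P⟫ + t ^ 2 * ‖z - P‖ ^ 2 := by
      rw [show P + t • (z - P) - w = (P - w) + t • (z - P) by abel, norm_add_sq_real,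
        real_inner_smul_right, norm_smul, Real.norm_eq_abs, mul_pow, sq_abs]
      ring
    rw [hn, inner_add_right, real_inner_smul_right] at hmin
    rw [inner_sub_left, real_inner_smul_left]
    simp only [smul_eq_mul] at hconv
    nlinarith [ht.1]
  have := nonneg_of_eventually_nonneg_add_mul (eventually_of_mem (Ioo_mem_nhdsGT one_pos) key)
  linarith

lemma exists_forall_proxObjective_le [ProperSpace E] {F : E → ℝ} (hF : Continuous F)
    (hF0 : ∀ z, 0 ≤ F z) {μ : ℝ} (hμ : 0 < μ) (y w : E) :
    ∃ P, ∀ z, proxObjective F μ y w P ≤ proxObjective F μ y w z := by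
  refine (show Continuous (proxObjective F μ y w) by unfold proxObjective; fun_prop
    ).exists_forall_le' w ?_
  set ρ := max 1 (2 * (‖y‖ + F w) / μ)
  filter_upwards [(isCompact_closedBall w ρ).compl_mem_cocompact] with z hz
  have hρ : ρ < ‖z - w‖ := by simpa [dist_eq_norm] using hz
  have h1 : 1 ≤ ‖z - w‖ := (le_max_left _ _).trans hρ.le
  have h2 : ‖y‖ + F w ≤ μ / 2 * ‖z - w‖ := by
    have := (le_max_right _ _).trans hρ.le
    rw [div_le_iff₀ hμ] at this
    linarith
  have h3 : ⟪y, z - w⟫ ≤ ‖y‖ * ‖z - w‖ := real_inner_le_norm _ _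
  have h4 := hF0 z
  have h5 := hF0 w
  simp only [proxObjective, sub_self, norm_zero]
  rw [inner_sub_right] at h3
  nlinarith

-- The minimiser of `proxObjective F μ y w`, described by its optimality condition.
noncomputable def prox (F : E → ℝ) (μ : ℝ) (y w : E) : E :=
  Classical.epsilon fun P => IsSubgradient F (y - μ • (P - w)) P

lemma isSubgradient_prox [ProperSpace E] {F : E → ℝ} (hFc : Continuous F) (hF : ConvexOn ℝ univ F)
    (hF0 : ∀ z, 0 ≤ F z) {μ : ℝ} (hμ : 0 < μ) (y w : E) :
    IsSubgradient F (y - μ • (prox F μ y w - w)) (prox F μ y w) :=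
  Classical.epsilon_spec <| (exists_forall_proxObjective_le hFc hF0 hμ y w).imp
    fun _ hP => isSubgradient_of_forall_proxObjective_le hF hP

lemma continuous_prox [ProperSpace E] {F : E → ℝ} (hFc : Continuous F) (hF : ConvexOn ℝ univ F)
    (hF0 : ∀ z, 0 ≤ F z) {μ : ℝ} (hμ : 0 < μ) : Continuous fun p : E × E => prox F μ p.1 p.2 := by
  refine (LipschitzWith.of_dist_le' (K := μ⁻¹ + 1) fun p q => ?_).continuous
  have h := norm_sub_le_of_isSubgradient hμ (isSubgradient_prox hFc hF hF0 hμ p.1 p.2)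
    (isSubgradient_prox hFc hF hF0 hμ q.1 q.2)
  have h1 : ‖p.1 - q.1‖ ≤ dist p q := by rw [← dist_eq_norm, Prod.dist_eq]; exact le_max_left _ _
  have h2 : ‖p.2 - q.2‖ ≤ dist p q := by rw [← dist_eq_norm, Prod.dist_eq]; exact le_max_right _ _
  rw [dist_eq_norm, add_mul, one_mul, inv_mul_eq_div]
  exact h.trans (add_le_add (div_le_div_of_nonneg_right h1 hμ.le) h2)

end Prox

section Arrangement

variable {ι : Type*} {m : ℕ} (a : ι → EuclideanSpace ℝ (Fin m)) (b : ι → ℝ)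

noncomputable def signVector (x : EuclideanSpace ℝ (Fin m)) : ι → SignType :=
  fun i => SignType.sign (⟪a i, x⟫ - b i)

lemma mem_arrFace_signVector (x : EuclideanSpace ℝ (Fin m)) :
    x ∈ arrFace a b (signVector a b x) :=
  fun _ => rfl

lemma add_smul_mem_arrFace {σ : ι → SignType} {x d : EuclideanSpace ℝ (Fin m)}
    (hx : x ∈ arrFace a b σ) (hd : ∀ i, signGap (σ i) ⟪a i, d⟫ = 0) {t : ℝ} (ht : 0 ≤ t) :
    x + t • d ∈ arrFace a b σ := by
  intro i
  have hxi : SignType.sign (⟪a i, x⟫ - b i) = σ i := hx i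
  rw [inner_add_right, real_inner_smul_right, add_sub_right_comm, ← hxi]
  exact sign_add_mul_of_signGap_eq_zero (hxi ▸ hd i) ht

variable [Fintype ι]

noncomputable def l1Residual (x : EuclideanSpace ℝ (Fin m)) : ℝ := ∑ i, |⟪a i, x⟫ - b i|

noncomputable def zonotopeSupport (d : EuclideanSpace ℝ (Fin m)) : ℝ := ∑ i, |⟪a i, d⟫|

noncomputable def recessionGap (σ : ι → SignType) (d : EuclideanSpace ℝ (Fin m)) : ℝ :=
  ∑ i, signGap (σ i) ⟪a i, d⟫

lemma recessionGap_nonneg (σ : ι → SignType) (d : EuclideanSpace ℝ (Fin m)) :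
    0 ≤ recessionGap a σ d :=
  Finset.sum_nonneg fun _ _ => signGap_nonneg _ _

lemma recessionGap_eq_zero_iff {σ : ι → SignType} {d : EuclideanSpace ℝ (Fin m)} :
    recessionGap a σ d = 0 ↔ ∀ i, signGap (σ i) ⟪a i, d⟫ = 0 := by
  simp [recessionGap, Finset.sum_eq_zero_iff_of_nonneg fun _ _ => signGap_nonneg _ _]

lemma recessionGap_smul (σ : ι → SignType) {t : ℝ} (ht : 0 ≤ t) (d : EuclideanSpace ℝ (Fin m)) :
    recessionGap a σ (t • d) = t * recessionGap a σ d := by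
  simp only [recessionGap, real_inner_smul_right, signGap_mul _ _ ht, Finset.mul_sum]

lemma continuous_recessionGap (σ : ι → SignType) : Continuous (recessionGap a σ) := by
  unfold recessionGap signGap; fun_prop

lemma recessionGap_sub_le {σ : ι → SignType} {x z : EuclideanSpace ℝ (Fin m)}
    (hx : x ∈ arrFace a b σ) (hz : z ∈ arrFace a b σ) :
    recessionGap a σ (z - x) ≤ l1Residual a b x := by
  refine Finset.sum_le_sum fun i _ => ?_
  rw [← hx i, inner_sub_right, show ⟪a i, z⟫ - ⟪a i, x⟫ = (⟪a i, z⟫ - b i) - (⟪a i, x⟫ - b i) by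
    ring]
  exact signGap_sub_le ((hz i).trans (hx i).symm)

lemma recessionGap_pos {σ : ι → SignType} {x d : EuclideanSpace ℝ (Fin m)}
    (hx : x ∈ arrFace a b σ) (hσ : IsBounded (arrFace a b σ)) (hd : d ≠ 0) :
    0 < recessionGap a σ d := by
  refine (recessionGap_nonneg a σ d).lt_of_ne fun h => ?_
  exact not_isBounded_of_forall_add_smul_mem hd
    (fun t ht => add_smul_mem_arrFace a b hx ((recessionGap_eq_zero_iff a).1 h.symm) ht) hσ

-- `c * ‖z - x‖ ≤ recessionGap a σ (z - x) ≤ l1Residual a b x` for `z` in the face.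
lemma isBounded_arrFace_of_recessionGap_pos {σ : ι → SignType} {x : EuclideanSpace ℝ (Fin m)}
    (hx : x ∈ arrFace a b σ) (hpos : ∀ d, d ≠ 0 → 0 < recessionGap a σ d) :
    IsBounded (arrFace a b σ) := by
  obtain ⟨c, hc, hc0⟩ := ((eventually_mul_norm_le_of_pos (continuous_recessionGap a σ)
    (fun t ht d => recessionGap_smul a σ ht d) hpos).and self_mem_nhdsWithin).exists
  refine (isBounded_closedBall (x := x) (r := l1Residual a b x / c)).subset fun z hz => ?_
  rw [mem_closedBall, dist_eq_norm, le_div_iff₀ hc0, mul_comm]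
  exact (hc (z - x)).trans (recessionGap_sub_le a b hx hz)

lemma isBounded_boundedComplex : IsBounded (boundedComplex a b) :=
  ((isBounded_biUnion (f := arrFace a b) (toFinite {σ | IsBounded (arrFace a b σ)})).2
    fun _ hσ => hσ).subset fun x hx => mem_biUnion hx (mem_arrFace_signVector a b x)

lemma eventually_mul_norm_le_recessionGap :
    ∀ᶠ c in 𝓝[>] 0, ∀ x ∈ boundedComplex a b, ∀ d,
      c * ‖d‖ ≤ recessionGap a (signVector a b x) d := by
  have hσ : ∀ σ : ι → SignType, ∀ᶠ c in 𝓝[>] (0 : ℝ),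
      ∀ x ∈ boundedComplex a b, signVector a b x = σ → ∀ d, c * ‖d‖ ≤ recessionGap a σ d := by
    intro σ
    by_cases h : ∃ x ∈ boundedComplex a b, signVector a b x = σ
    · obtain ⟨x, hx, rfl⟩ := h
      filter_upwards [eventually_mul_norm_le_of_pos (continuous_recessionGap a _)
        (fun t ht d => recessionGap_smul a _ ht d)
        (fun d hd => recessionGap_pos a b (mem_arrFace_signVector a b x) hx hd)]
        with c hc _ _ _ using hc
    · exact Eventually.of_forall fun c x hx hxσ => absurd ⟨x, hx, hxσ⟩ h
  filter_upwards [eventually_all.2 hσ] with c hc x hx using hc _ x hx rfl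

lemma convexOn_l1Residual : ConvexOn ℝ univ (l1Residual a b) := by
  refine ⟨convex_univ, fun x _ y _ s t hs ht hst => ?_⟩
  simp only [l1Residual, smul_eq_mul, Finset.mul_sum, ← Finset.sum_add_distrib]
  refine Finset.sum_le_sum fun i _ => ?_
  have hsplit : ⟪a i, s • x + t • y⟫ - b i = s * (⟪a i, x⟫ - b i) + t * (⟪a i, y⟫ - b i) := by
    rw [inner_add_right, real_inner_smul_right, real_inner_smul_right]
    linear_combination (b i) * hst
  rw [hsplit]
  refine (abs_add_le _ _).trans (le_of_eq ?_)
  rw [abs_mul, abs_mul, abs_of_nonneg hs, abs_of_nonneg ht]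

lemma continuous_l1Residual : Continuous (l1Residual a b) := by unfold l1Residual; fun_prop

lemma l1Residual_nonneg (x : EuclideanSpace ℝ (Fin m)) : 0 ≤ l1Residual a b x :=
  Finset.sum_nonneg fun _ _ => abs_nonneg _

lemma zonotopeSupport_sub_le (x : EuclideanSpace ℝ (Fin m)) :
    zonotopeSupport a x - ∑ i, |b i| ≤ l1Residual a b x := by
  rw [zonotopeSupport, l1Residual, ← Finset.sum_sub_distrib]
  exact Finset.sum_le_sum fun i _ => by linarith [abs_sub_abs_le_abs_sub ⟪a i, x⟫ (b i)]

lemma l1Residual_le (x : EuclideanSpace ℝ (Fin m)) :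
    l1Residual a b x ≤ (∑ i, ‖a i‖) * ‖x‖ + ∑ i, |b i| := by
  rw [l1Residual, Finset.sum_mul, ← Finset.sum_add_distrib]
  exact Finset.sum_le_sum fun i _ => by
    linarith [abs_sub ⟪a i, x⟫ (b i), abs_real_inner_le_norm (a i) x]

lemma l1Residual_sub_inner_le {y w : EuclideanSpace ℝ (Fin m)} {R : ℝ}
    (hy : ‖y‖ ≤ ∑ i, ‖a i‖) (hw : ‖w‖ ≤ R) :
    l1Residual a b w - ⟪y, w⟫ + ∑ i, |b i| ≤ 2 * (∑ i, ‖a i‖) * R + 2 * ∑ i, |b i| := by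
  have hL : 0 ≤ ∑ i, ‖a i‖ := by positivity
  have h1 := mul_le_mul_of_nonneg_left hw hL
  have h2 := (neg_le_abs _).trans (abs_real_inner_le_norm y w)
  have h3 := mul_le_mul hy hw (norm_nonneg _) hL
  linarith [l1Residual_le a b w]

lemma zonotopeSupport_neg (d : EuclideanSpace ℝ (Fin m)) :
    zonotopeSupport a (-d) = zonotopeSupport a d := by
  simp [zonotopeSupport, inner_neg_right, abs_neg]

lemma eventually_l1Residual_sub_smul {x d : EuclideanSpace ℝ (Fin m)}
    (hd : recessionGap a (signVector a b x) d = 0) :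
    ∀ᶠ t in 𝓝 0, l1Residual a b (x - t • d) = l1Residual a b x - t * zonotopeSupport a d := by
  filter_upwards [eventually_all.2 fun i =>
    eventually_abs_sub_mul ((recessionGap_eq_zero_iff a).1 hd i)] with t ht
  simp only [l1Residual, zonotopeSupport, Finset.mul_sum, ← Finset.sum_sub_distrib]
  refine Finset.sum_congr rfl fun i _ => ?_
  rw [inner_sub_right, real_inner_smul_right, sub_right_comm]
  exact ht i

-- Against a recession direction `d` of the face of `x`, `l1Residual` decreases at the rate
-- `zonotopeSupport a d`, which a subgradient strictly inside the zonotope does not allow.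
lemma mem_boundedComplex_of_isSubgradient {g x : EuclideanSpace ℝ (Fin m)}
    (hg : IsSubgradient (l1Residual a b) g x) (hint : ∀ d, d ≠ 0 → ⟪g, d⟫ < zonotopeSupport a d) :
    x ∈ boundedComplex a b := by
  by_contra hx
  obtain ⟨d, hd, hgap⟩ : ∃ d, d ≠ 0 ∧ recessionGap a (signVector a b x) d = 0 := by
    by_contra! h
    exact hx (isBounded_arrFace_of_recessionGap_pos a b (mem_arrFace_signVector a b x)
      fun d hd => (recessionGap_nonneg a _ d).lt_of_ne (h d hd).symm)
  obtain ⟨t, ht, ht0 : 0 < t⟩ := (((eventually_l1Residual_sub_smul a b hgap).filter_mono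
    nhdsWithin_le_nhds).and (self_mem_nhdsWithin (s := Ioi 0))).exists
  have hsub := hg (x - t • d)
  rw [ht, sub_sub_cancel_left, inner_neg_right, real_inner_smul_right] at hsub
  have := hint d hd
  nlinarith

lemma isSubgradient_l1Residual {c : ι → ℝ} {x : EuclideanSpace ℝ (Fin m)} (hc : ∀ i, |c i| ≤ 1)
    (hsign : ∀ i, ⟪a i, x⟫ - b i ≠ 0 → c i = SignType.sign (⟪a i, x⟫ - b i)) :
    IsSubgradient (l1Residual a b) (∑ i, c i • a i) x := by
  intro z
  simp only [l1Residual, sum_inner, real_inner_smul_left, ← Finset.sum_add_distrib]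
  refine Finset.sum_le_sum fun i _ => ?_
  rw [inner_sub_right, show ⟪a i, z⟫ - ⟪a i, x⟫ = (⟪a i, z⟫ - b i) - (⟪a i, x⟫ - b i) by ring]
  exact abs_add_mul_sub_le (hc i) (hsign i) _

lemma inner_sum_smul_add_recessionGap_le {c : ι → ℝ} {x : EuclideanSpace ℝ (Fin m)}
    (hc : ∀ i, |c i| ≤ 1) (hcx : ∀ i, 0 ≤ c i * (⟪a i, x⟫ - b i))
    (h0 : ∀ i, ⟪a i, x⟫ - b i = 0 → c i = 0) (d : EuclideanSpace ℝ (Fin m)) :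
    ⟪∑ i, c i • a i, d⟫ + recessionGap a (signVector a b x) d ≤ zonotopeSupport a d := by
  simp only [sum_inner, real_inner_smul_left, recessionGap, signVector, zonotopeSupport,
    ← Finset.sum_add_distrib]
  exact Finset.sum_le_sum fun i _ => mul_add_signGap_le (hc i) (hcx i) (h0 i) _

-- The closed ball of radius `c` about `y` lies in the zonotope `∑ i, [-a i, a i]`, whose support
-- function is `zonotopeSupport a`.
def ZonotopeDepth (c : ℝ) (y : EuclideanSpace ℝ (Fin m)) : Prop :=
  ∀ d, ⟪y, d⟫ + c * ‖d‖ ≤ zonotopeSupport a d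

variable {a} in
lemma ZonotopeDepth.smul {c : ℝ} {y : EuclideanSpace ℝ (Fin m)} (hy : ZonotopeDepth a c y)
    {s : ℝ} (hs0 : 0 ≤ s) (hs1 : s ≤ 1) : ZonotopeDepth a c (s • y) := by
  intro d
  have h1 := hy d
  have h2 := hy (-d)
  rw [inner_neg_right, norm_neg, zonotopeSupport_neg] at h2
  rw [real_inner_smul_left]
  nlinarith

lemma mul_norm_sub_sq_le {μ c : ℝ} {y w P : EuclideanSpace ℝ (Fin m)}
    (hP : IsSubgradient (l1Residual a b) (y - μ • (P - w)) P) (hc : 0 ≤ c)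
    (hy : ZonotopeDepth a c y) :
    μ * ‖P - w‖ ^ 2 ≤ l1Residual a b w - ⟪y, w⟫ + ∑ i, |b i| := by
  have h1 := hP w
  have h2 := zonotopeSupport_sub_le a b P
  have h3 := hy P
  have h4 : ⟪y - μ • (P - w), w - P⟫ = ⟪y, w⟫ - ⟪y, P⟫ + μ * ‖P - w‖ ^ 2 := by
    rw [inner_sub_left, real_inner_smul_left, inner_sub_right, ← neg_sub P w, inner_neg_right,
      real_inner_self_eq_norm_sq]
    ring
  nlinarith [mul_nonneg hc (norm_nonneg P)]

lemma prox_mem_boundedComplex {μ c : ℝ} (hμ : 0 < μ) (hc : 0 < c) {y w : EuclideanSpace ℝ (Fin m)}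
    (hy : ZonotopeDepth a c y) (hsmall : μ * (l1Residual a b w - ⟪y, w⟫ + ∑ i, |b i|) < c ^ 2) :
    prox (l1Residual a b) μ y w ∈ boundedComplex a b := by
  set P := prox (l1Residual a b) μ y w
  have hP := isSubgradient_prox (continuous_l1Residual a b) (convexOn_l1Residual a b)
    (l1Residual_nonneg a b) hμ y w
  have hPw : μ * ‖P - w‖ < c := by
    refine lt_of_pow_lt_pow_left₀ 2 hc.le ?_
    have := mul_norm_sub_sq_le a b hP hc.le hy
    nlinarith
  refine mem_boundedComplex_of_isSubgradient a b hP fun d hd => ?_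
  have hd' : 0 < ‖d‖ := norm_pos_iff.2 hd
  rw [inner_sub_left, real_inner_smul_left]
  nlinarith [hy d, abs_real_inner_le_norm (P - w) d, neg_abs_le ⟪P - w, d⟫]

-- The gradient of the Huber smoothing, with parameter `s`, of `l1Residual a b`.
noncomputable def huberGradient (s : ℝ) (x : EuclideanSpace ℝ (Fin m)) :
    EuclideanSpace ℝ (Fin m) :=
  ∑ i, clampUnit ((⟪a i, x⟫ - b i) / s) • a i

lemma norm_huberGradient_le (s : ℝ) (x : EuclideanSpace ℝ (Fin m)) :
    ‖huberGradient a b s x‖ ≤ ∑ i, ‖a i‖ :=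
  (norm_sum_le _ _).trans <| Finset.sum_le_sum fun _ _ => by
    rw [norm_smul, Real.norm_eq_abs]
    exact mul_le_of_le_one_left (norm_nonneg _) (abs_clampUnit_le _)

lemma exists_zonotopeDepth_huberGradient :
    ∃ c > 0, ∀ x ∈ boundedComplex a b, ∀ s > 0, ZonotopeDepth a c (huberGradient a b s x) := by
  obtain ⟨c, hc, hc0⟩ := ((eventually_mul_norm_le_recessionGap a b).and self_mem_nhdsWithin).exists
  refine ⟨c, hc0, fun x hx s hs d => (add_le_add le_rfl (hc x hx d)).trans ?_⟩
  refine inner_sum_smul_add_recessionGap_le a b (fun _ => abs_clampUnit_le _) (fun i => ?_)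
    (fun i hi => by rw [hi, zero_div, clampUnit_zero]) d
  have := mul_nonneg (clampUnit_mul_self_nonneg ((⟪a i, x⟫ - b i) / s)) hs.le
  rwa [mul_assoc, div_mul_cancel₀ _ hs.ne'] at this

lemma eventually_isSubgradient_huberGradient (x : EuclideanSpace ℝ (Fin m)) :
    ∀ᶠ p : ℝ × EuclideanSpace ℝ (Fin m) in 𝓝 (0, x),
      0 < p.1 → IsSubgradient (l1Residual a b) (huberGradient a b p.1 p.2) x := by
  have hi : ∀ i, ∀ᶠ p : ℝ × EuclideanSpace ℝ (Fin m) in 𝓝 (0, x), 0 < p.1 →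
      ⟪a i, x⟫ - b i ≠ 0 →
        clampUnit ((⟪a i, p.2⟫ - b i) / p.1) = SignType.sign (⟪a i, x⟫ - b i) := by
    intro i
    by_cases h0 : ⟪a i, x⟫ - b i = 0
    · exact Eventually.of_forall fun _ _ h => absurd h0 h
    have hcont : Continuous fun p : ℝ × EuclideanSpace ℝ (Fin m) => (p.1, ⟪a i, p.2⟫ - b i) := by
      fun_prop
    filter_upwards [(hcont.tendsto (0, x)).eventually (eventually_clampUnit_div_eq_sign h0)]
      with p hp hp1 _ using hp hp1
  filter_upwards [eventually_all.2 hi] with p hp hp1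
  exact isSubgradient_l1Residual a b (fun _ => abs_clampUnit_le _) fun i => hp i hp1

lemma continuousAt_huberGradient {p : ℝ × EuclideanSpace ℝ (Fin m)} (hp : p.1 ≠ 0) :
    ContinuousAt (fun q : ℝ × EuclideanSpace ℝ (Fin m) => huberGradient a b q.1 q.2) p := by
  unfold huberGradient
  fun_prop (disch := assumption)

noncomputable def contraction (μ : ℝ) (x₀ : EuclideanSpace ℝ (Fin m))
    (p : ℝ × EuclideanSpace ℝ (Fin m)) : EuclideanSpace ℝ (Fin m) :=
  if 0 < p.1 then
    prox (l1Residual a b) μ ((1 - p.1) • huberGradient a b p.1 p.2) ((1 - p.1) • p.2 + p.1 • x₀)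
  else p.2

variable {a b}

lemma contraction_of_nonpos {μ : ℝ} {x₀ : EuclideanSpace ℝ (Fin m)}
    {p : ℝ × EuclideanSpace ℝ (Fin m)} (hp : p.1 ≤ 0) : contraction a b μ x₀ p = p.2 :=
  if_neg (not_lt.2 hp)

lemma contraction_one (μ : ℝ) (x₀ x : EuclideanSpace ℝ (Fin m)) :
    contraction a b μ x₀ (1, x) = prox (l1Residual a b) μ 0 x₀ := by
  simp [contraction]

-- Near `(0, x)`, the point `x` is the proximal point of a nearby Huber gradient, which is a
-- subgradient of `l1Residual` at `x`.
lemma continuousAt_contraction_zero {μ : ℝ} (hμ : 0 < μ) (x₀ x : EuclideanSpace ℝ (Fin m)) :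
    ContinuousAt (contraction a b μ x₀) (0, x) := by
  set L := ∑ i, ‖a i‖
  let g : ℝ × EuclideanSpace ℝ (Fin m) → ℝ :=
    fun p => |p.1| * L / μ + ‖(1 - p.1) • p.2 + p.1 • x₀ - x‖ + ‖p.2 - x‖
  have hg : Tendsto g (𝓝 (0, x)) (𝓝 0) := by
    simpa [g] using (show Continuous g by fun_prop).tendsto (0, x)
  rw [ContinuousAt, contraction_of_nonpos le_rfl, tendsto_iff_norm_sub_tendsto_zero]
  refine squeeze_zero' (Eventually.of_forall fun _ => norm_nonneg _) ?_ hg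
  filter_upwards [eventually_isSubgradient_huberGradient a b x] with ⟨t, q⟩ hsub
  by_cases ht : 0 < t
  · have hx : IsSubgradient (l1Residual a b) (huberGradient a b t q - μ • (x - x)) x := by
      simpa using hsub ht
    have hP := norm_sub_le_of_isSubgradient hμ (isSubgradient_prox (continuous_l1Residual a b)
      (convexOn_l1Residual a b) (l1Residual_nonneg a b) hμ ((1 - t) • huberGradient a b t q)
      ((1 - t) • q + t • x₀)) hx
    have hy : ‖(1 - t) • huberGradient a b t q - huberGradient a b t q‖ ≤ |t| * L := by
      rw [show (1 - t) • huberGradient a b t q - huberGradient a b t q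
        = -(t • huberGradient a b t q) by module, norm_neg, norm_smul, Real.norm_eq_abs]
      exact mul_le_mul_of_nonneg_left (norm_huberGradient_le a b t q) (abs_nonneg t)
    rw [contraction, if_pos ht]
    calc _ ≤ _ := hP
      _ ≤ |t| * L / μ + ‖(1 - t) • q + t • x₀ - x‖ := by gcongr
      _ ≤ g (t, q) := le_add_of_nonneg_right (norm_nonneg _)
  · rw [contraction_of_nonpos (not_lt.1 ht)]
    exact le_add_of_nonneg_left (by positivity)

lemma continuous_contraction {μ : ℝ} (hμ : 0 < μ) (x₀ : EuclideanSpace ℝ (Fin m)) :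
    Continuous (contraction a b μ x₀) := by
  refine continuous_iff_continuousAt.2 fun ⟨t, x⟩ => ?_
  rcases lt_trichotomy t 0 with ht | rfl | ht
  · refine continuousAt_snd.congr_of_eventuallyEq ?_
    filter_upwards [(continuous_fst.tendsto (t, x)).eventually (eventually_lt_nhds ht)]
      with p hp using contraction_of_nonpos hp.le
  · exact continuousAt_contraction_zero hμ x₀ x
  · have hargs : ContinuousAt (fun p : ℝ × EuclideanSpace ℝ (Fin m) =>
        ((1 - p.1) • huberGradient a b p.1 p.2, (1 - p.1) • p.2 + p.1 • x₀)) (t, x) :=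
      ((continuousAt_const.sub continuousAt_fst).smul
        (continuousAt_huberGradient a b ht.ne')).prodMk (by fun_prop)
    refine ((continuous_prox (continuous_l1Residual a b) (convexOn_l1Residual a b)
      (l1Residual_nonneg a b) hμ).continuousAt.comp hargs).congr_of_eventuallyEq ?_
    filter_upwards [(continuous_fst.tendsto (t, x)).eventually (eventually_gt_nhds ht)]
      with p hp using if_pos hp

lemma eventually_mapsTo_contraction {x₀ : EuclideanSpace ℝ (Fin m)}
    (hx₀ : x₀ ∈ boundedComplex a b) :
    ∀ᶠ μ in 𝓝[>] 0, ∀ t ∈ Icc (0 : ℝ) 1, ∀ x ∈ boundedComplex a b,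
      contraction a b μ x₀ (t, x) ∈ boundedComplex a b := by
  obtain ⟨c, hc, hdepth⟩ := exists_zonotopeDepth_huberGradient a b
  obtain ⟨R, hR⟩ := (isBounded_boundedComplex a b).subset_closedBall 0
  set K := 2 * (∑ i, ‖a i‖) * R + 2 * ∑ i, |b i|
  have hK : ∀ᶠ μ in 𝓝 (0 : ℝ), μ * K < c ^ 2 :=
    ((show Continuous fun μ : ℝ => μ * K by fun_prop).tendsto' 0 0 (zero_mul K)).eventually
      (eventually_lt_nhds (by positivity))
  filter_upwards [nhdsWithin_le_nhds hK, self_mem_nhdsWithin] with μ hμK hμ t ht x hx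
  rcases ht.1.eq_or_lt with rfl | ht0
  · rwa [contraction_of_nonpos le_rfl]
  rw [contraction, if_pos ht0]
  have hy_depth : ZonotopeDepth a c ((1 - t) • huberGradient a b t x) :=
    (hdepth x hx t ht0).smul (by linarith [ht.2]) (by linarith [ht.1])
  refine prox_mem_boundedComplex a b hμ hc hy_depth
    (lt_of_le_of_lt (mul_le_mul_of_nonneg_left ?_ (le_of_lt hμ)) hμK)
  have hw : ‖(1 - t) • x + t • x₀‖ ≤ R := mem_closedBall_zero_iff.1 <|
    convex_closedBall (0 : EuclideanSpace ℝ (Fin m)) R (hR hx) (hR hx₀) (by linarith [ht.2])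
      ht.1 (by ring)
  have hy : ‖(1 - t) • huberGradient a b t x‖ ≤ ∑ i, ‖a i‖ := by
    rw [norm_smul, Real.norm_eq_abs, abs_of_nonneg (by linarith [ht.2])]
    exact (mul_le_of_le_one_left (norm_nonneg _) (by linarith [ht.1])).trans
      (norm_huberGradient_le a b t x)
  exact l1Residual_sub_inner_le a b hy hw

end Arrangement

theorem stmt_8_general (ι : Type*) [Fintype ι] (m : ℕ)
    (a : ι → EuclideanSpace ℝ (Fin m)) (b : ι → ℝ)
    (hne : (boundedComplex a b).Nonempty) :
    ContractibleSpace ↥(boundedComplex a b) := by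
  obtain ⟨x₀, hx₀⟩ := hne
  obtain ⟨μ, hmaps, hμ⟩ := ((eventually_mapsTo_contraction hx₀).and self_mem_nhdsWithin).exists
  exact contractibleSpace_of_homotopy (continuous_contraction hμ x₀)
    (fun _ => contraction_of_nonpos le_rfl) (fun x _ => contraction_one μ x₀ x) hmaps ⟨x₀, hx₀⟩

/-- The bounded complex of a finite affine hyperplane arrangement in `ℝ^m`
is contractible whenever it is non-empty. -/
theorem stmt_8 (ι : Type*) [Fintype ι] (m : ℕ)
    (a : ι → EuclideanSpace ℝ (Fin m)) (b : ι → ℝ) (ha : ∀ i, a i ≠ 0)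
    (hne : (boundedComplex a b).Nonempty) :
    ContractibleSpace ↥(boundedComplex a b) :=
  stmt_8_general ι m a b hne
end

section
/- Let F_i, F_j be top-dimensional bounded regions of a generic affine hyperplane arrangement in ℝ^m, let σ_{ij} = closure(F_i) ∩ closure(F_j), and define Ψ(F) = Σ_{v ∈ ∂F} Ψ(v), where for each vertex v of ∂F, Ψ(v) is the oriented (m−1)-simplex of the nerve (independence complex) N spanned by the m hyperplanes through v, oriented by the inward normals of F. Then ⟨Ψ(F_i), Ψ(F_j)⟩ = (−1)^{m − dim σ_{ij}} · (number of vertices of σ_{ij}), where ⟨·,·⟩ is the inner product on C_{m−1}(N; ℝ) making oriented simplices orthonormal. -/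
open scoped RealInnerProductSpace

open Classical in
/-- The nerve chain `Ψ(F) = Σ_{v ∈ ∂F} Ψ(v) ∈ C_{m-1}(N; ℝ)` of the region `F` with sign
vector `φ`: a chain on the `(m-1)`-simplices of the independence complex `N` (an
`(m-1)`-simplex being a set `S` of `m` hyperplanes meeting in a vertex), whose coefficient
on `S` is `±1` if the vertex cut out by `S` lies on `∂F` — the sign comparing the
orientation given by the ordered inward normals `(φ_{i_1} a_{i_1}, …, φ_{i_m} a_{i_m})`,
`i_1 < ⋯ < i_m ∈ S`, of `F` at that vertex with the standard orientation of `ℝ^m` — and `0`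
otherwise. -/
noncomputable def PsiChain {s : ℕ} {m : ℕ} (a : Fin s → EuclideanSpace ℝ (Fin m))
    (b : Fin s → ℝ) (φ : Fin s → SignType) : Finset (Fin s) → ℝ := fun S =>
  if hS : S.card = m then
    if ∃ x ∈ closure (arrFace a b φ), {i | ⟪a i, x⟫ = b i} = (↑S : Set (Fin s)) then
      ((SignType.sign (Matrix.det
        (Matrix.of fun p q : Fin m => ((φ (S.orderIsoOfFin hS p) : ℝ) •
          a (S.orderIsoOfFin hS p)) q)) : ℤ) : ℝ)
    else 0
  else 0

/-!
The closures of the two regions are the polyhedra `{x | ∀ i, 0 ≤ φ i * (⟪a i, x⟫ - b i)}`, and a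
simplex `S` contributes to the inner product only if it is cut out by a vertex `v` lying on both,
i.e. by a vertex of `σ`. At such a vertex boundedness and genericity force the `m` normals through
`v` to form a basis, so `v` is determined by `S`. The hyperplanes `D` on which the two sign vectors
disagree contain all of `σ`; hence `D ⊆ S`, and the two orientations of `Ψ(v)` differ by the
`|D|` normals that are reversed, giving the sign `(-1)^|D|`. Finally, moving from `v` off every
hyperplane through it except those of `D` gives a point of `σ` at which only `D` is tight, so `σ`
spans the orthogonal complement of the normals in `D`, of dimension `m - |D|`.
-/

open Filter Topology

lemma SignType.sign_eq_iff_pos_mul {c : SignType} (hc : c ≠ 0) (r : ℝ) :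
    SignType.sign r = c ↔ 0 < (c : ℝ) * r := by
  cases c <;> simp_all [sign_eq_one_iff, sign_eq_neg_one_iff]

lemma SignType.cast_ne_zero {c : SignType} (hc : c ≠ 0) : (c : ℝ) ≠ 0 := by
  cases c <;> simp_all

lemma SignType.cast_mul_self {c : SignType} (hc : c ≠ 0) : (c : ℝ) * c = 1 := by
  cases c <;> simp_all

lemma SignType.cast_eq_neg_of_ne {c d : SignType} (hc : c ≠ 0) (hd : d ≠ 0) (hcd : c ≠ d) :
    (d : ℝ) = -c := by
  cases c <;> cases d <;> simp_all

lemma sign_mul_sign_mul_eq_neg_one_pow {c₁ c₂ d : ℝ} {k : ℕ} (hc : c₁ * c₂ = (-1) ^ k)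
    (hd : d ≠ 0) :
    ((SignType.sign (c₁ * d) : ℤ) : ℝ) * ((SignType.sign (c₂ * d) : ℤ) : ℝ) = (-1) ^ k := by
  rw [← Int.cast_mul, ← SignType.coe_mul, ← sign_mul,
    show c₁ * d * (c₂ * d) = (-1) ^ k * d ^ 2 by rw [← hc]; ring, sign_mul, sign_pow,
    sign_pos (sq_pos_of_ne_zero hd)]
  simp

lemma prod_cast_mul_prod_cast {ι : Type*} {φ₁ φ₂ : ι → SignType} (hφ₁ : ∀ i, φ₁ i ≠ 0)
    (hφ₂ : ∀ i, φ₂ i ≠ 0) {S : Finset ι} (hS : {i | φ₁ i ≠ φ₂ i} ⊆ S) :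
    (∏ i ∈ S, (φ₁ i : ℝ)) * ∏ i ∈ S, (φ₂ i : ℝ) = (-1) ^ {i | φ₁ i ≠ φ₂ i}.ncard := by
  classical
  have hmul : ∀ i, (φ₁ i : ℝ) * φ₂ i = if φ₁ i ≠ φ₂ i then -1 else 1 := fun i => by
    cases h₁ : φ₁ i <;> cases h₂ : φ₂ i <;> simp_all
  rw [← Finset.prod_mul_distrib, Finset.prod_congr rfl fun i _ => hmul i, Finset.prod_ite,
    Finset.prod_const, Finset.prod_const_one, mul_one, ← Set.ncard_coe_finset, Finset.coe_filter]
  exact congrArg _ (congrArg _ (Set.ext fun i => and_iff_right_of_imp fun h => hS h))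

section Arrangement

variable {ι : Type*} {m : ℕ} (a : ι → EuclideanSpace ℝ (Fin m)) (b : ι → ℝ)

def tightSet (x : EuclideanSpace ℝ (Fin m)) : Set ι := {i | ⟪a i, x⟫ = b i}

def closedRegion (φ : ι → SignType) : Set (EuclideanSpace ℝ (Fin m)) :=
  {x | ∀ i, 0 ≤ (φ i : ℝ) * (⟪a i, x⟫ - b i)}

noncomputable def normalsMap (S : Set ι) : EuclideanSpace ℝ (Fin m) →ₗ[ℝ] (S → ℝ) :=
  LinearMap.pi fun i => innerₛₗ ℝ (a i)

@[simp] lemma normalsMap_apply (S : Set ι) (u : EuclideanSpace ℝ (Fin m)) (i : S) :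
    normalsMap a S u i = ⟪a i, u⟫ := rfl

lemma isClosed_closedRegion (φ : ι → SignType) : IsClosed (closedRegion a b φ) := by
  simp only [closedRegion, Set.ofPred_forall]
  exact isClosed_iInter fun i => isClosed_le continuous_const (by fun_prop)

lemma closure_arrFace {φ : ι → SignType} (hφ : ∀ i, φ i ≠ 0) (hne : (arrFace a b φ).Nonempty) :
    closure (arrFace a b φ) = closedRegion a b φ := by
  refine subset_antisymm
    (closure_minimal (fun x hx i => ?_) (isClosed_closedRegion a b φ)) fun x hx => ?_
  · exact ((SignType.sign_eq_iff_pos_mul (hφ i) _).1 (hx i)).le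
  obtain ⟨y, hy⟩ := hne
  have htend : Tendsto (AffineMap.lineMap x y) (𝓝[>] (0 : ℝ)) (𝓝 x) := by
    simpa using (AffineMap.lineMap_continuous.tendsto (0 : ℝ)).mono_left nhdsWithin_le_nhds
  refine mem_closure_of_tendsto htend ?_
  filter_upwards [Ioo_mem_nhdsGT one_pos] with t ht i
  rw [SignType.sign_eq_iff_pos_mul (hφ i)]
  have hyi := (SignType.sign_eq_iff_pos_mul (hφ i) _).1 (hy i)
  have hxi := hx i
  have hline : (φ i : ℝ) * (⟪a i, AffineMap.lineMap x y t⟫ - b i) =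
      (1 - t) * ((φ i : ℝ) * (⟪a i, x⟫ - b i)) + t * ((φ i : ℝ) * (⟪a i, y⟫ - b i)) := by
    rw [AffineMap.lineMap_apply_module, inner_add_right, real_inner_smul_right,
      real_inner_smul_right]
    ring
  rw [hline]
  nlinarith [ht.1, ht.2]

lemma not_isBounded_arrFace {φ : ι → SignType} (hne : (arrFace a b φ).Nonempty)
    {u : EuclideanSpace ℝ (Fin m)} (hu : u ≠ 0) (horth : ∀ i, ⟪a i, u⟫ = 0) :
    ¬ Bornology.IsBounded (arrFace a b φ) := by
  intro hbd
  obtain ⟨y, hy⟩ := hne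
  obtain ⟨C, hC⟩ := isBounded_iff_forall_norm_le.1 hbd
  have hmem : ∀ t : ℝ, y + t • u ∈ arrFace a b φ := fun t i => by
    simpa [inner_add_right, real_inner_smul_right, horth] using hy i
  have hu' : 0 < ‖u‖ := norm_pos_iff.2 hu
  set t := (C + ‖y‖ + 1) / ‖u‖
  have hnorm : ‖t • u‖ = C + ‖y‖ + 1 := by
    have : 0 ≤ C := (norm_nonneg y).trans (hC y hy)
    rw [norm_smul, Real.norm_of_nonneg (by positivity), div_mul_cancel₀ _ hu'.ne']
  have := norm_sub_le (y + t • u) y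
  rw [add_sub_cancel_left, hnorm] at this
  linarith [hC _ (hmem t)]

/-- Sliding along `u` from `x` until the hyperplane `j` is hit gives a point on `m + 1`
hyperplanes. -/
lemma inner_eq_zero_of_forall_tightSet [Finite ι]
    (hgen : ∀ x, (tightSet a b x).ncard ≤ m) {x : EuclideanSpace ℝ (Fin m)}
    (hx : (tightSet a b x).ncard = m) {u : EuclideanSpace ℝ (Fin m)}
    (hu : ∀ i ∈ tightSet a b x, ⟪a i, u⟫ = 0) (j : ι) : ⟪a j, u⟫ = 0 := by
  by_contra hj
  set w := x + ((b j - ⟪a j, x⟫) / ⟪a j, u⟫) • u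
  have hsub : insert j (tightSet a b x) ⊆ tightSet a b w := by
    rintro i (rfl | hi)
    · simp only [tightSet, Set.mem_ofPred_eq, w, inner_add_right, real_inner_smul_right,
        div_mul_cancel₀ _ hj]
      ring
    · simp only [tightSet, Set.mem_ofPred_eq, w, inner_add_right, real_inner_smul_right,
        hu i hi, mul_zero, add_zero]
      exact hi
  have hcard := Set.ncard_le_ncard hsub (Set.toFinite _)
  rw [Set.ncard_insert_of_notMem (fun hjx => hj (hu j hjx)), hx] at hcard
  linarith [hgen w]

lemma normalsMap_tightSet_injective [Finite ι] {φ : ι → SignType}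
    (hbd : Bornology.IsBounded (arrFace a b φ)) (hgen : ∀ x, (tightSet a b x).ncard ≤ m)
    {x : EuclideanSpace ℝ (Fin m)} (hx : x ∈ closure (arrFace a b φ))
    (hxm : (tightSet a b x).ncard = m) :
    Function.Injective (normalsMap a (tightSet a b x)) := by
  rw [← LinearMap.ker_eq_bot, LinearMap.ker_eq_bot']
  intro u hu
  by_contra hu0
  refine not_isBounded_arrFace a b (closure_nonempty_iff.1 ⟨x, hx⟩) hu0 (fun j => ?_) hbd
  exact inner_eq_zero_of_forall_tightSet a b hgen hxm (fun i hi => congrFun hu ⟨i, hi⟩) j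

lemma normalsMap_surjective_of_injective [Finite ι] {S : Set ι} (hS : S.ncard = m)
    (h : Function.Injective (normalsMap a S)) : Function.Surjective (normalsMap a S) := by
  have : Fintype S := Fintype.ofFinite S
  refine (LinearMap.injective_iff_surjective_of_finrank_eq_finrank ?_).1 h
  rw [finrank_euclideanSpace_fin, Module.finrank_fintype_fun_eq_card, ← Nat.card_eq_fintype_card,
    Nat.card_coe_set_eq, hS]

lemma normalsMap_surjective_of_subset {S T : Set ι} (hTS : T ⊆ S)
    (h : Function.Surjective (normalsMap a S)) : Function.Surjective (normalsMap a T) := by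
  classical
  intro c
  obtain ⟨u, hu⟩ := h fun i => if hi : (i : ι) ∈ T then c ⟨i, hi⟩ else 0
  refine ⟨u, funext fun i => ?_⟩
  simpa using congrFun hu ⟨i, hTS i.2⟩

lemma finrank_ker_normalsMap [Finite ι] {T : Set ι} (h : Function.Surjective (normalsMap a T)) :
    Module.finrank ℝ (LinearMap.ker (normalsMap a T)) = m - T.ncard := by
  have : Fintype T := Fintype.ofFinite T
  have hrank := LinearMap.finrank_range_add_finrank_ker (normalsMap a T)
  rw [LinearMap.range_eq_top.2 h, finrank_top, Module.finrank_fintype_fun_eq_card,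
    ← Nat.card_eq_fintype_card, Nat.card_coe_set_eq, finrank_euclideanSpace_fin] at hrank
  omega

lemma eq_of_subset_tightSet {S : Set ι} (hS : Function.Injective (normalsMap a S))
    {x y : EuclideanSpace ℝ (Fin m)} (hx : S ⊆ tightSet a b x) (hy : S ⊆ tightSet a b y) :
    x = y :=
  hS <| funext fun i => (hx i.2).trans (hy i.2).symm

end Arrangement

section CommonFace

variable {ι : Type*} {m : ℕ} (a : ι → EuclideanSpace ℝ (Fin m)) (b : ι → ℝ)
  {φ₁ φ₂ : ι → SignType} (hφ₁ : ∀ i, φ₁ i ≠ 0) (hφ₂ : ∀ i, φ₂ i ≠ 0)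
include hφ₁ hφ₂

lemma setOf_ne_subset_tightSet {x : EuclideanSpace ℝ (Fin m)}
    (hx : x ∈ closedRegion a b φ₁ ∩ closedRegion a b φ₂) :
    {i | φ₁ i ≠ φ₂ i} ⊆ tightSet a b x := by
  intro i hi
  have h₂ := hx.2 i
  rw [SignType.cast_eq_neg_of_ne (hφ₁ i) (hφ₂ i) hi, neg_mul] at h₂
  have h₀ : (φ₁ i : ℝ) * (⟪a i, x⟫ - b i) = 0 := le_antisymm (by linarith) (hx.1 i)
  exact sub_eq_zero.1 ((mul_eq_zero.1 h₀).resolve_left (SignType.cast_ne_zero (hφ₁ i)))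

/-- A relative interior point of the common face, reached from the vertex `v` by moving into the
side given by `φ₁` on the other hyperplanes through `v`. -/
lemma exists_mem_inter_forall_pos [Finite ι] {v : EuclideanSpace ℝ (Fin m)}
    (hv : v ∈ closedRegion a b φ₁ ∩ closedRegion a b φ₂)
    (hsurj : Function.Surjective (normalsMap a (tightSet a b v))) :
    ∃ p ∈ closedRegion a b φ₁ ∩ closedRegion a b φ₂,
      ∀ i, φ₁ i = φ₂ i → 0 < (φ₁ i : ℝ) * (⟪a i, p⟫ - b i) := by
  classical
  obtain ⟨u, hu⟩ := hsurj fun i => if φ₁ i = φ₂ i then (φ₁ i : ℝ) else 0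
  have hu' : ∀ i ∈ tightSet a b v, ⟪a i, u⟫ = if φ₁ i = φ₂ i then (φ₁ i : ℝ) else 0 :=
    fun i hi => congrFun hu ⟨i, hi⟩
  have hnear : ∀ φ : ι → SignType, (∀ i, φ i ≠ 0) → v ∈ closedRegion a b φ →
      ∀ᶠ t : ℝ in 𝓝 0, ∀ i ∉ tightSet a b v, 0 < (φ i : ℝ) * (⟪a i, v + t • u⟫ - b i) := by
    intro φ hφ hvφ
    refine eventually_all.2 fun i => eventually_imp_distrib_left.2 fun hi => ?_
    have hpos : 0 < (φ i : ℝ) * (⟪a i, v + (0 : ℝ) • u⟫ - b i) := by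
      rw [zero_smul, add_zero]
      exact (hvφ i).lt_of_ne' (mul_ne_zero (SignType.cast_ne_zero (hφ i)) (sub_ne_zero.2 hi))
    exact continuousAt_const.eventually_lt (by fun_prop) hpos
  obtain ⟨t, ht, htv⟩ := ((hnear φ₁ hφ₁ hv.1).and (hnear φ₂ hφ₂ hv.2)).exists_gt
  have hval : ∀ i ∈ tightSet a b v,
      (φ₁ i : ℝ) * (⟪a i, v + t • u⟫ - b i) = (if φ₁ i = φ₂ i then t else 0) ∧
      (φ₂ i : ℝ) * (⟪a i, v + t • u⟫ - b i) = (if φ₁ i = φ₂ i then t else 0) := by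
    intro i hi
    rw [inner_add_right, real_inner_smul_right, hi, add_sub_cancel_left, hu' i hi]
    split_ifs with h
    · rw [← h, mul_left_comm, SignType.cast_mul_self (hφ₁ i), mul_one]
      exact ⟨rfl, rfl⟩
    · simp
  refine ⟨v + t • u, ⟨fun i => ?_, fun i => ?_⟩, fun i hi => ?_⟩
  all_goals by_cases hiv : i ∈ tightSet a b v
  · rw [(hval i hiv).1]; split_ifs <;> linarith
  · exact (htv.1 i hiv).le
  · rw [(hval i hiv).2]; split_ifs <;> linarith
  · exact (htv.2 i hiv).le
  · rw [(hval i hiv).1, if_pos hi]; exact ht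
  · exact htv.1 i hiv

lemma vectorSpan_inter_closedRegion [Finite ι] {p : EuclideanSpace ℝ (Fin m)}
    (hp : p ∈ closedRegion a b φ₁ ∩ closedRegion a b φ₂)
    (hpos : ∀ i, φ₁ i = φ₂ i → 0 < (φ₁ i : ℝ) * (⟪a i, p⟫ - b i)) :
    vectorSpan ℝ (closedRegion a b φ₁ ∩ closedRegion a b φ₂) =
      LinearMap.ker (normalsMap a {i | φ₁ i ≠ φ₂ i}) := by
  apply le_antisymm
  · rw [vectorSpan_def, Submodule.span_le]
    rintro - ⟨x, hx, y, hy, rfl⟩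
    refine funext fun i => ?_
    have hxi := setOf_ne_subset_tightSet a b hφ₁ hφ₂ hx i.2
    have hyi := setOf_ne_subset_tightSet a b hφ₁ hφ₂ hy i.2
    simp only [normalsMap_apply, vsub_eq_sub, inner_sub_right, Pi.zero_apply]
    rw [hxi, hyi, sub_self]
  · intro w hw
    have hnear : ∀ᶠ t : ℝ in 𝓝 0,
        ∀ i, φ₁ i = φ₂ i → 0 < (φ₁ i : ℝ) * (⟪a i, p + t • w⟫ - b i) := by
      refine eventually_all.2 fun i => eventually_imp_distrib_left.2 fun hi => ?_
      have hpos₀ : 0 < (φ₁ i : ℝ) * (⟪a i, p + (0 : ℝ) • w⟫ - b i) := by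
        rw [zero_smul, add_zero]; exact hpos i hi
      exact continuousAt_const.eventually_lt (by fun_prop) hpos₀
    obtain ⟨t, ht, htw⟩ := hnear.exists_gt
    have hmem : p + t • w ∈ closedRegion a b φ₁ ∩ closedRegion a b φ₂ := by
      have hsame : ∀ i, φ₁ i ≠ φ₂ i → ⟪a i, p + t • w⟫ = ⟪a i, p⟫ := fun i hi => by
        rw [inner_add_right, real_inner_smul_right]
        simp [show ⟪a i, w⟫ = 0 from congrFun hw ⟨i, hi⟩]
      refine ⟨fun i => ?_, fun i => ?_⟩ <;> by_cases hi : φ₁ i = φ₂ i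
      · exact (htw i hi).le
      · rw [hsame i hi]; exact hp.1 i
      · rw [← hi]; exact (htw i hi).le
      · rw [hsame i hi]; exact hp.2 i
    have htw' := vsub_mem_vectorSpan ℝ hmem hp
    rw [vsub_eq_sub, add_sub_cancel_left] at htw'
    simpa [ht.ne'] using Submodule.smul_mem _ t⁻¹ htw'

end CommonFace

section Chain

variable {s m : ℕ} (a : Fin s → EuclideanSpace ℝ (Fin m)) (b : Fin s → ℝ)

def normalMatrix (S : Finset (Fin s)) (hS : S.card = m) : Matrix (Fin m) (Fin m) ℝ :=
  Matrix.of fun p q => a (S.orderIsoOfFin hS p) q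

lemma det_normalMatrix_ne_zero {S : Finset (Fin s)} (hS : S.card = m)
    (h : Function.Injective (normalsMap a (S : Set (Fin s)))) : (normalMatrix a S hS).det ≠ 0 := by
  intro hdet
  obtain ⟨u, hu0, hu⟩ := Matrix.exists_mulVec_eq_zero_iff.2 hdet
  have hker : normalsMap a S (WithLp.toLp 2 u) = 0 := funext fun i => by
    have := congrFun hu ((S.orderIsoOfFin hS).symm i)
    simp only [normalMatrix, Matrix.mulVec, dotProduct, Matrix.of_apply,
      OrderIso.apply_symm_apply, Pi.zero_apply] at this
    rw [Pi.zero_apply, normalsMap_apply]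
    simpa [PiLp.inner_apply, mul_comm] using this
  exact hu0 (congrArg WithLp.ofLp (h (hker.trans (map_zero _).symm)))

lemma det_smul_normalMatrix (φ : Fin s → SignType) (S : Finset (Fin s)) (hS : S.card = m) :
    (Matrix.of fun p q : Fin m => ((φ (S.orderIsoOfFin hS p) : ℝ) • a (S.orderIsoOfFin hS p)) q).det
      = (∏ i ∈ S, (φ i : ℝ)) * (normalMatrix a S hS).det := by
  rw [← Finset.prod_coe_sort, ← (S.orderIsoOfFin hS).toEquiv.prod_comp, ← Matrix.det_mul_column]
  rfl

lemma PsiChain_of_mem_closure {φ : Fin s → SignType} {S : Finset (Fin s)} (hS : S.card = m)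
    {x : EuclideanSpace ℝ (Fin m)} (hx : x ∈ closure (arrFace a b φ))
    (hxS : tightSet a b x = S) :
    PsiChain a b φ S =
      ((SignType.sign ((∏ i ∈ S, (φ i : ℝ)) * (normalMatrix a S hS).det) : ℤ) : ℝ) := by
  rw [PsiChain, dif_pos hS, if_pos ⟨x, hx, hxS⟩, det_smul_normalMatrix]

lemma PsiChain_eq_zero {φ : Fin s → SignType} {S : Finset (Fin s)}
    (h : ¬ (S.card = m ∧ ∃ x ∈ closure (arrFace a b φ), tightSet a b x = S)) :
    PsiChain a b φ S = 0 := by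
  unfold PsiChain
  split_ifs with hS hx
  · exact absurd ⟨hS, hx⟩ h
  all_goals rfl

variable {φ₁ φ₂ : Fin s → SignType} (hφ₁ : ∀ i, φ₁ i ≠ 0) (hφ₂ : ∀ i, φ₂ i ≠ 0)
  (hne₁ : (arrFace a b φ₁).Nonempty) (hne₂ : (arrFace a b φ₂).Nonempty)
  (hbd : Bornology.IsBounded (arrFace a b φ₁)) (hgen : ∀ x, (tightSet a b x).ncard ≤ m)
include hφ₁ hφ₂ hne₁ hne₂ hbd hgen

open Classical in
lemma PsiChain_mul_PsiChain (S : Finset (Fin s)) :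
    PsiChain a b φ₁ S * PsiChain a b φ₂ S =
      if ∃ x ∈ closure (arrFace a b φ₁) ∩ closure (arrFace a b φ₂),
          (tightSet a b x).ncard = m ∧ tightSet a b x = S
      then (-1) ^ {i | φ₁ i ≠ φ₂ i}.ncard else 0 := by
  split_ifs with hS
  · obtain ⟨x, hx, hxm, hxS⟩ := hS
    have hcard : S.card = m := by rw [← Set.ncard_coe_finset, ← hxS, hxm]
    have hinj := normalsMap_tightSet_injective a b hbd hgen hx.1 hxm
    rw [hxS] at hinj
    have hD : {i | φ₁ i ≠ φ₂ i} ⊆ (S : Set (Fin s)) := by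
      rw [← hxS]
      refine setOf_ne_subset_tightSet a b hφ₁ hφ₂ ?_
      rwa [← closure_arrFace a b hφ₁ hne₁, ← closure_arrFace a b hφ₂ hne₂]
    rw [PsiChain_of_mem_closure a b hcard hx.1 hxS, PsiChain_of_mem_closure a b hcard hx.2 hxS]
    exact sign_mul_sign_mul_eq_neg_one_pow (prod_cast_mul_prod_cast hφ₁ hφ₂ hD)
      (det_normalMatrix_ne_zero a hcard hinj)
  by_cases h₁ : S.card = m ∧ ∃ x ∈ closure (arrFace a b φ₁), tightSet a b x = S
  · by_cases h₂ : ∃ x ∈ closure (arrFace a b φ₂), tightSet a b x = S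
    · obtain ⟨hcard, x₁, hx₁, hx₁S⟩ := h₁
      obtain ⟨x₂, hx₂, hx₂S⟩ := h₂
      have hxm : (tightSet a b x₁).ncard = m := by rw [hx₁S, Set.ncard_coe_finset, hcard]
      have hx₁₂ : x₁ = x₂ := eq_of_subset_tightSet a b
        (normalsMap_tightSet_injective a b hbd hgen hx₁ hxm) subset_rfl (hx₁S.trans hx₂S.symm).le
      exact absurd ⟨x₁, ⟨hx₁, hx₁₂ ▸ hx₂⟩, hxm, hx₁S⟩ hS
    · rw [PsiChain_eq_zero a b fun h => h₂ h.2, mul_zero]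
  · rw [PsiChain_eq_zero a b h₁, zero_mul]

lemma sum_PsiChain_mul_PsiChain :
    ∑ S, PsiChain a b φ₁ S * PsiChain a b φ₂ S =
      (-1) ^ {i | φ₁ i ≠ φ₂ i}.ncard *
        ({x ∈ closure (arrFace a b φ₁) ∩ closure (arrFace a b φ₂) |
          (tightSet a b x).ncard = m}.ncard : ℝ) := by
  classical
  simp_rw [PsiChain_mul_PsiChain a b hφ₁ hφ₂ hne₁ hne₂ hbd hgen]
  rw [Finset.sum_ite, Finset.sum_const_zero, add_zero, Finset.sum_const, nsmul_eq_mul, mul_comm,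
    ← Set.ncard_coe_finset, Finset.coe_filter]
  congr 2
  symm
  refine Set.ncard_congr (fun x _ => (Set.toFinite (tightSet a b x)).toFinset)
    (fun x hx => ⟨Finset.mem_univ _, x, hx.1, hx.2, (Set.Finite.coe_toFinset _).symm⟩)
    (fun x y hx hy hxy => ?_) ?_
  · have hxy' := Set.Finite.toFinset_inj.1 hxy
    exact eq_of_subset_tightSet a b (normalsMap_tightSet_injective a b hbd hgen hx.1.1 hx.2)
      subset_rfl hxy'.le
  · rintro S ⟨-, x, hx, hxm, hxS⟩
    exact ⟨x, ⟨hx, hxm⟩, Finset.coe_injective (by rw [Set.Finite.coe_toFinset, hxS])⟩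

end Chain

theorem stmt_11_general (s m : ℕ) (a : Fin s → EuclideanSpace ℝ (Fin m)) (b : Fin s → ℝ)
    (hgeneric : ∀ x : EuclideanSpace ℝ (Fin m),
      ({i | ⟪a i, x⟫ = b i} : Set (Fin s)).ncard ≤ m)
    (φ₁ φ₂ : Fin s → SignType)
    (hφ₁ : (∀ i, φ₁ i ≠ 0) ∧ (arrFace a b φ₁).Nonempty ∧
      Bornology.IsBounded (arrFace a b φ₁))
    (hφ₂ : (∀ i, φ₂ i ≠ 0) ∧ (arrFace a b φ₂).Nonempty ∧
      Bornology.IsBounded (arrFace a b φ₂))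
    (σij : Set (EuclideanSpace ℝ (Fin m)))
    (hσ : σij = closure (arrFace a b φ₁) ∩ closure (arrFace a b φ₂)) :
    ∑ S : Finset (Fin s), PsiChain a b φ₁ S * PsiChain a b φ₂ S =
      (-1 : ℝ) ^ (m - Module.finrank ℝ (affineSpan ℝ σij).direction) *
        ({x ∈ σij | ({i | ⟪a i, x⟫ = b i} : Set (Fin s)).ncard = m}.ncard : ℝ) := by
  obtain ⟨hφ₁0, hne₁, hbd⟩ := hφ₁
  obtain ⟨hφ₂0, hne₂, -⟩ := hφ₂
  subst hσ
  rw [sum_PsiChain_mul_PsiChain a b hφ₁0 hφ₂0 hne₁ hne₂ hbd hgeneric]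
  rcases Set.eq_empty_or_nonempty
    {x ∈ closure (arrFace a b φ₁) ∩ closure (arrFace a b φ₂) | (tightSet a b x).ncard = m}
    with hV | ⟨v, hv, hvm⟩
  · simp only [tightSet] at hV ⊢
    rw [hV, Set.ncard_empty, Nat.cast_zero, mul_zero, mul_zero]
  have hsurj := normalsMap_surjective_of_injective a hvm
    (normalsMap_tightSet_injective a b hbd hgeneric hv.1 hvm)
  rw [closure_arrFace a b hφ₁0 hne₁, closure_arrFace a b hφ₂0 hne₂] at hv ⊢
  have hD := setOf_ne_subset_tightSet a b hφ₁0 hφ₂0 hv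
  obtain ⟨p, hp, hpos⟩ := exists_mem_inter_forall_pos a b hφ₁0 hφ₂0 hv hsurj
  rw [direction_affineSpan, vectorSpan_inter_closedRegion a b hφ₁0 hφ₂0 hp hpos,
    finrank_ker_normalsMap a (normalsMap_surjective_of_subset a hD hsurj),
    Nat.sub_sub_self (hvm ▸ Set.ncard_le_ncard hD)]
  rfl

/-- For top-dimensional bounded regions `F_i, F_j` of a generic affine
arrangement in `ℝ^m`, with `σ_{ij} = cl F_i ∩ cl F_j`, the inner product (in the
orthonormal-simplex inner product on `C_{m-1}(N; ℝ)`) of the nerve chains `Ψ(F_i)` and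
`Ψ(F_j)` equals `(-1)^{m - dim σ_{ij}}` times the number of vertices of `σ_{ij}`. -/
theorem stmt_11 (s m : ℕ) (a : Fin s → EuclideanSpace ℝ (Fin m)) (b : Fin s → ℝ)
    (ha : ∀ i, a i ≠ 0)
    (hgeneric : ∀ x : EuclideanSpace ℝ (Fin m),
      ({i | ⟪a i, x⟫ = b i} : Set (Fin s)).ncard ≤ m)
    (φ₁ φ₂ : Fin s → SignType)
    (hφ₁ : (∀ i, φ₁ i ≠ 0) ∧ (arrFace a b φ₁).Nonempty ∧
      Bornology.IsBounded (arrFace a b φ₁))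
    (hφ₂ : (∀ i, φ₂ i ≠ 0) ∧ (arrFace a b φ₂).Nonempty ∧
      Bornology.IsBounded (arrFace a b φ₂))
    (σij : Set (EuclideanSpace ℝ (Fin m)))
    (hσ : σij = closure (arrFace a b φ₁) ∩ closure (arrFace a b φ₂)) :
    ∑ S : Finset (Fin s), PsiChain a b φ₁ S * PsiChain a b φ₂ S =
      (-1 : ℝ) ^ (m - Module.finrank ℝ (affineSpan ℝ σij).direction) *
        ({x ∈ σij | ({i | ⟪a i, x⟫ = b i} : Set (Fin s)).ncard = m}.ncard : ℝ) :=
  stmt_11_general s m a b hgeneric φ₁ φ₂ hφ₁ hφ₂ σij hσ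
end

section
/- In the arrangement of five lines in ℝ² consisting of two horizontal lines y = 1 and y = −1, the vertical line x = 0, and the two diagonal lines y = x and y = −x, with F_1, F_2, F_3, F_4 the four triangular bounded regions, the combinatorial pairing Φ(F_i,F_j) = (−1)^{dim(cl F_i ∩ cl F_j)}·|vertices(cl F_i ∩ cl F_j)| satisfies Φ(w, w) < 0 for w = F_1 + F_2 − F_3 − F_4; hence Φ is not positive definite for this non-generic arrangement. -/
/-- The four closed triangular bounded regions of the arrangement of the five lines
`y = 1`, `y = -1`, `x = 0`, `y = x`, `y = -x` in `ℝ²`: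
`T 0, T 1` above the `x`-axis (left and right of `x = 0`), `T 2, T 3` below. -/
def nongenericTriangles : Fin 4 → Set (ℝ × ℝ)
  | 0 => {p | p.1 ≤ 0 ∧ p.2 ≤ 1 ∧ -p.1 ≤ p.2}
  | 1 => {p | 0 ≤ p.1 ∧ p.2 ≤ 1 ∧ p.1 ≤ p.2}
  | 2 => {p | p.1 ≤ 0 ∧ -1 ≤ p.2 ∧ p.2 ≤ p.1}
  | 3 => {p | 0 ≤ p.1 ∧ -1 ≤ p.2 ∧ p.2 ≤ -p.1}

/-- The vertices of the arrangement: the origin (on the three lines `x = 0`, `y = x`,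
`y = -x`) and the six further pairwise intersection points on the lines `y = ±1`. -/
def nongenericVertices : Set (ℝ × ℝ) :=
  {(0, 0), (0, 1), (-1, 1), (1, 1), (0, -1), (-1, -1), (1, -1)}

/-- The combinatorial pairing `Φ(F_i, F_j) = (-1)^{dim (cl F_i ∩ cl F_j)} ⋅
|vertices(cl F_i ∩ cl F_j)|` for this arrangement. -/
noncomputable def nongenericPhi (i j : Fin 4) : ℤ :=
  (-1 : ℤ) ^ (Module.finrank ℝ
      (affineSpan ℝ (nongenericTriangles i ∩ nongenericTriangles j)).direction) *
    ((nongenericVertices ∩ nongenericTriangles i ∩ nongenericTriangles j).ncard : ℤ)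

/-!
`Φ(F_i, F_j)` only depends on how `F_i` and `F_j` meet: a triangle meets itself in a
2-dimensional set with three vertices (`Φ = 3`), two triangles on the same side of the
`x`-axis share a segment of `x = 0` with two vertices (`Φ = -2`), and two triangles on
opposite sides meet only in the origin (`Φ = 1`). Hence `Φ(w, w) = 4·3 + 4·(-2) - 8·1 = -4`.
-/

open Module

lemma finrank_direction_affineSpan_eq_one_of_collinear {k V P : Type*} [DivisionRing k]
    [AddCommGroup V] [Module k V] [AddTorsor V P] {s : Set P}
    (hc : Collinear k s) (hs : s.Nontrivial) :
    finrank k (affineSpan k s).direction = 1 := by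
  have := hc.finiteDimensional_vectorSpan
  rw [direction_affineSpan]
  have hle := collinear_iff_finrank_le_one.mp hc
  have hne : finrank k (vectorSpan k s) ≠ 0 := by
    rw [Ne, Submodule.finrank_eq_zero, vectorSpan_eq_bot_iff_subsingleton]
    exact hs.not_subsingleton
  omega

lemma finrank_direction_affineSpan_eq_two_of_det_ne_zero {k : Type*} [Field k]
    {s : Set (k × k)} {p q r : k × k} (hp : p ∈ s) (hq : q ∈ s) (hr : r ∈ s)
    (hdet : (q.1 - p.1) * (r.2 - p.2) - (q.2 - p.2) * (r.1 - p.1) ≠ 0) :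
    finrank k (affineSpan k s).direction = 2 := by
  rw [direction_affineSpan]
  have hli : LinearIndependent k ![q -ᵥ p, r -ᵥ p] := by
    rw [LinearIndependent.pair_iff]
    rintro a b hab
    simp only [vsub_eq_sub, Prod.ext_iff, Prod.fst_add, Prod.snd_add, Prod.smul_fst,
      Prod.smul_snd, Prod.fst_sub, Prod.snd_sub, smul_eq_mul, Prod.fst_zero,
      Prod.snd_zero] at hab
    obtain ⟨h1, h2⟩ := hab
    -- Cramer's rule: `a * det` and `b * det` are combinations of the two coordinate equations.
    constructor
    · apply (mul_eq_zero.mp _).resolve_right hdet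
      linear_combination (r.2 - p.2) * h1 - (r.1 - p.1) * h2
    · apply (mul_eq_zero.mp _).resolve_right hdet
      linear_combination (q.1 - p.1) * h2 - (q.2 - p.2) * h1
  have hspan : Submodule.span k (Set.range ![q -ᵥ p, r -ᵥ p]) ≤ vectorSpan k s := by
    rw [Submodule.span_le, Matrix.range_cons, Matrix.range_cons, Matrix.range_empty]
    simp only [Set.union_empty, Set.singleton_union, Set.insert_subset_iff,
      Set.singleton_subset_iff, SetLike.mem_coe]
    exact ⟨vsub_mem_vectorSpan k hq hp, vsub_mem_vectorSpan k hr hp⟩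
  have hge := (finrank_span_eq_card hli).symm.trans_le (Submodule.finrank_mono hspan)
  have hle := Submodule.finrank_le (vectorSpan k s)
  simp only [Fintype.card_fin, finrank_prod, finrank_self] at hge hle
  omega

lemma collinear_setOf_fst_eq_zero {k : Type*} [DivisionRing k] :
    Collinear k {p : k × k | p.1 = 0} := by
  refine (collinear_iff_of_mem (p₀ := (0, 0)) (by simp)).mpr ⟨(0, 1), fun p hp => ⟨p.2, ?_⟩⟩
  ext <;> simp_all

namespace Nongeneric

lemma ncard_vertices_inter (i j : Fin 4) :
    (nongenericVertices ∩ nongenericTriangles i ∩ nongenericTriangles j).ncard =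
      if i = j then 3 else if (i : ℕ) / 2 = (j : ℕ) / 2 then 2 else 1 := by
  fin_cases i <;> fin_cases j <;>
    simp [nongenericVertices, nongenericTriangles, Set.insert_inter_of_mem,
      Set.insert_inter_of_notMem, Set.ncard_insert_of_notMem]

lemma finrank_direction_affineSpan_triangle (i : Fin 4) :
    finrank ℝ (affineSpan ℝ (nongenericTriangles i)).direction = 2 := by
  fin_cases i
  · refine finrank_direction_affineSpan_eq_two_of_det_ne_zero
      (p := (0, 0)) (q := (0, 1)) (r := (-1, 1)) ?_ ?_ ?_ ?_ <;> norm_num [nongenericTriangles]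
  · refine finrank_direction_affineSpan_eq_two_of_det_ne_zero
      (p := (0, 0)) (q := (0, 1)) (r := (1, 1)) ?_ ?_ ?_ ?_ <;> norm_num [nongenericTriangles]
  · refine finrank_direction_affineSpan_eq_two_of_det_ne_zero
      (p := (0, 0)) (q := (0, -1)) (r := (-1, -1)) ?_ ?_ ?_ ?_ <;> norm_num [nongenericTriangles]
  · refine finrank_direction_affineSpan_eq_two_of_det_ne_zero
      (p := (0, 0)) (q := (0, -1)) (r := (1, -1)) ?_ ?_ ?_ ?_ <;> norm_num [nongenericTriangles]

lemma triangles_inter_subset_fst_eq_zero {i j : Fin 4} (hij : i ≠ j)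
    (h : (i : ℕ) / 2 = (j : ℕ) / 2) :
    nongenericTriangles i ∩ nongenericTriangles j ⊆ {p | p.1 = 0} := by
  rintro ⟨x, y⟩ hp
  fin_cases i <;> fin_cases j <;> simp [nongenericTriangles] at hij h hp ⊢ <;> grind

lemma triangles_inter_eq_origin {i j : Fin 4} (h : (i : ℕ) / 2 ≠ (j : ℕ) / 2) :
    nongenericTriangles i ∩ nongenericTriangles j = {(0, 0)} := by
  ext ⟨x, y⟩
  fin_cases i <;> fin_cases j <;> simp [nongenericTriangles] at h ⊢ <;> grind

lemma finrank_direction_affineSpan_inter (i j : Fin 4) :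
    finrank ℝ (affineSpan ℝ (nongenericTriangles i ∩ nongenericTriangles j)).direction =
      if i = j then 2 else if (i : ℕ) / 2 = (j : ℕ) / 2 then 1 else 0 := by
  split_ifs with hij hhalf
  · rw [hij, Set.inter_self, finrank_direction_affineSpan_triangle]
  · refine finrank_direction_affineSpan_eq_one_of_collinear
      (collinear_setOf_fst_eq_zero.subset (triangles_inter_subset_fst_eq_zero hij hhalf)) ?_
    -- the two shared vertices on the segment `x = 0` already make the intersection nontrivial
    have hcard := ncard_vertices_inter i j
    rw [if_neg hij, if_pos hhalf] at hcard
    refine (Set.one_lt_ncard_iff_nontrivial_and_finite.mp (hcard ▸ one_lt_two)).1.mono ?_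
    rw [Set.inter_assoc]
    exact Set.inter_subset_right
  · rw [triangles_inter_eq_origin hhalf, direction_affineSpan, vectorSpan_singleton,
      finrank_bot]

lemma phi_eq (i j : Fin 4) :
    nongenericPhi i j = if i = j then 3 else if (i : ℕ) / 2 = (j : ℕ) / 2 then -2 else 1 := by
  rw [nongenericPhi, finrank_direction_affineSpan_inter, ncard_vertices_inter]
  split_ifs <;> norm_num

end Nongeneric

/-- In the non-generic arrangement of the five lines `y = 1`, `y = -1`,
`x = 0`, `y = x`, `y = -x` in `ℝ²`, with `F_1, F_2, F_3, F_4` the four bounded triangles,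
the combinatorial pairing `Φ` satisfies `Φ(w, w) < 0` for `w = F_1 + F_2 - F_3 - F_4`;
hence `Φ` is not positive definite (the definiteness result requires genericity). -/
theorem stmt_17 (w : Fin 4 → ℤ) (hw : w = ![1, 1, -1, -1]) :
    (∑ i : Fin 4, ∑ j : Fin 4, w i * w j * nongenericPhi i j) < 0 := by
  subst hw
  simp only [Nongeneric.phi_eq]
  decide
end
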